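/- arXiv:2507.17983 — 6 statements merged into one kernel-verified Lean document; each statement's English description precedes it below -/
import Mathlib

section
/- Let L be a positive integer and let μ : {0,...,L} × ℕ → ℝ be positive. Suppose (1) l·μ(l,m+1) − l·μ(l,m) is non-increasing in m and non-decreasing in l, and (2) (l+1)·μ(l+1,m) − l·μ(l,m) is non-increasing in l and non-decreasing in m. Call a state (l,m) with 1 ≤ m and l ≤ L−1 'type 1' if l·μ(l,m) > (l+1)·μ(l+1,m−1). Then if (l',m') is type 1 with m' ≥ 2 and l' ≤ L−1, the state (l',m'−1) is also type 1 (i.e., l'·μ(l',m'−1) > (l'+1)·μ(l'+1,m'−2)). -/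
theorem stmt0_general
    (L : ℕ) (μ : ℕ → ℕ → ℝ)
    (h1m : ∀ l, l ≤ L → ∀ m,
      (l : ℝ) * μ l (m + 2) - (l : ℝ) * μ l (m + 1) ≤
        (l : ℝ) * μ l (m + 1) - (l : ℝ) * μ l m)
    (h1l : ∀ l, l + 1 ≤ L → ∀ m,
      (l : ℝ) * μ l (m + 1) - (l : ℝ) * μ l m ≤
        ((l : ℝ) + 1) * μ (l + 1) (m + 1) - ((l : ℝ) + 1) * μ (l + 1) m)
    (l' m : ℕ) (hl' : l' + 1 ≤ L)
    (htype1 : (l' : ℝ) * μ l' (m + 2) > ((l' : ℝ) + 1) * μ (l' + 1) (m + 1)) :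
    (l' : ℝ) * μ l' (m + 1) > ((l' : ℝ) + 1) * μ (l' + 1) m := by
  have concave_in_m := h1m l' (by omega) m
  have supermodular := h1l l' hl' m
  have gap_antitone :
      (l' : ℝ) * μ l' (m + 2) - ((l' : ℝ) + 1) * μ (l' + 1) (m + 1) ≤
        (l' : ℝ) * μ l' (m + 1) - ((l' : ℝ) + 1) * μ (l' + 1) m := by
    linarith
  linarith

/-- Assumption 2 plus type-1 propagation to the previous column:
if `(l', m'+... )` (with `m' ≥ 2`, written as `m' = m+2`) is type 1, so is `(l', m'-1)`. -/
theorem stmt0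
    (L : ℕ) (hL : 0 < L) (μ : ℕ → ℕ → ℝ)
    (hpos : ∀ l, l ≤ L → ∀ m, 0 < μ l m)
    (h1m : ∀ l, l ≤ L → ∀ m,
      (l : ℝ) * μ l (m + 2) - (l : ℝ) * μ l (m + 1) ≤
        (l : ℝ) * μ l (m + 1) - (l : ℝ) * μ l m)
    (h1l : ∀ l, l + 1 ≤ L → ∀ m,
      (l : ℝ) * μ l (m + 1) - (l : ℝ) * μ l m ≤
        ((l : ℝ) + 1) * μ (l + 1) (m + 1) - ((l : ℝ) + 1) * μ (l + 1) m)
    (h2l : ∀ l, l + 2 ≤ L → ∀ m,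
      ((l : ℝ) + 2) * μ (l + 2) m - ((l : ℝ) + 1) * μ (l + 1) m ≤
        ((l : ℝ) + 1) * μ (l + 1) m - (l : ℝ) * μ l m)
    (h2m : ∀ l, l + 1 ≤ L → ∀ m,
      ((l : ℝ) + 1) * μ (l + 1) m - (l : ℝ) * μ l m ≤
        ((l : ℝ) + 1) * μ (l + 1) (m + 1) - (l : ℝ) * μ l (m + 1))
    (l' m : ℕ) (hl' : l' + 1 ≤ L)
    (htype1 : (l' : ℝ) * μ l' (m + 2) > ((l' : ℝ) + 1) * μ (l' + 1) (m + 1)) :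
    (l' : ℝ) * μ l' (m + 1) > ((l' : ℝ) + 1) * μ (l' + 1) m :=
  stmt0_general L μ h1m h1l l' m hl' htype1
end

section
/- Let L be a positive integer and let μ : {0,...,L} × ℕ → ℝ be positive. Suppose (1) l·μ(l,m+1) − l·μ(l,m) is non-increasing in m and non-decreasing in l, and (2) (l+1)·μ(l+1,m) − l·μ(l,m) is non-increasing in l and non-decreasing in m. Call a state (l,m) with 1 ≤ m and l ≤ L−1 'type 1' if l·μ(l,m) > (l+1)·μ(l+1,m−1). Then if (l',m') is type 1 with l' ≤ L−2, the state (l'+1,m') is also type 1 (i.e., (l'+1)·μ(l'+1,m') > (l'+2)·μ(l'+2,m'−1)). -/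
theorem stmt1_general
    (L : ℕ) (μ : ℕ → ℕ → ℝ)
    (h2l : ∀ l, l + 2 ≤ L → ∀ m,
      ((l : ℝ) + 2) * μ (l + 2) m - ((l : ℝ) + 1) * μ (l + 1) m ≤
        ((l : ℝ) + 1) * μ (l + 1) m - (l : ℝ) * μ l m)
    (h2m : ∀ l, l + 1 ≤ L → ∀ m,
      ((l : ℝ) + 1) * μ (l + 1) m - (l : ℝ) * μ l m ≤
        ((l : ℝ) + 1) * μ (l + 1) (m + 1) - (l : ℝ) * μ l (m + 1))
    (l' m : ℕ) (hl' : l' + 2 ≤ L)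
    (htype1 : (l' : ℝ) * μ l' (m + 1) > ((l' : ℝ) + 1) * μ (l' + 1) m) :
    ((l' : ℝ) + 1) * μ (l' + 1) (m + 1) > ((l' : ℝ) + 2) * μ (l' + 2) m := by
  calc ((l' : ℝ) + 2) * μ (l' + 2) m
      ≤ 2 * (((l' : ℝ) + 1) * μ (l' + 1) m) - l' * μ l' m := by
        linarith [h2l l' hl' m]
    _ ≤ ((l' : ℝ) + 1) * μ (l' + 1) (m + 1) + ((l' : ℝ) + 1) * μ (l' + 1) m
          - l' * μ l' (m + 1) := by
        linarith [h2m l' (by omega) m]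
    _ < ((l' : ℝ) + 1) * μ (l' + 1) (m + 1) := by linarith

/-- Assumption 2 plus type-1 propagation to the next row:
if `(l', m')` (with `m' ≥ 1`, written `m' = m+1`, and `l' ≤ L-2`) is type 1,
so is `(l'+1, m')`. -/
theorem stmt1
    (L : ℕ) (hL : 0 < L) (μ : ℕ → ℕ → ℝ)
    (hpos : ∀ l, l ≤ L → ∀ m, 0 < μ l m)
    (h1m : ∀ l, l ≤ L → ∀ m,
      (l : ℝ) * μ l (m + 2) - (l : ℝ) * μ l (m + 1) ≤
        (l : ℝ) * μ l (m + 1) - (l : ℝ) * μ l m)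
    (h1l : ∀ l, l + 1 ≤ L → ∀ m,
      (l : ℝ) * μ l (m + 1) - (l : ℝ) * μ l m ≤
        ((l : ℝ) + 1) * μ (l + 1) (m + 1) - ((l : ℝ) + 1) * μ (l + 1) m)
    (h2l : ∀ l, l + 2 ≤ L → ∀ m,
      ((l : ℝ) + 2) * μ (l + 2) m - ((l : ℝ) + 1) * μ (l + 1) m ≤
        ((l : ℝ) + 1) * μ (l + 1) m - (l : ℝ) * μ l m)
    (h2m : ∀ l, l + 1 ≤ L → ∀ m,
      ((l : ℝ) + 1) * μ (l + 1) m - (l : ℝ) * μ l m ≤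
        ((l : ℝ) + 1) * μ (l + 1) (m + 1) - (l : ℝ) * μ l (m + 1))
    (l' m : ℕ) (hl' : l' + 2 ≤ L)
    (htype1 : (l' : ℝ) * μ l' (m + 1) > ((l' : ℝ) + 1) * μ (l' + 1) m) :
    ((l' : ℝ) + 1) * μ (l' + 1) (m + 1) > ((l' : ℝ) + 2) * μ (l' + 2) m :=
  stmt1_general L μ h2l h2m l' m hl' htype1
end

section
/- Let L be a positive integer and let μ satisfy the two difference conditions of Assumption 2: l·μ(l,m+1) − l·μ(l,m) is non-increasing in m and non-decreasing in l, and (l+1)·μ(l+1,m) − l·μ(l,m) is non-increasing in l and non-decreasing in m. Define (l,m) with 1 ≤ m, l ≤ L−1 to be type 1 if l·μ(l,m) > (l+1)·μ(l+1,m−1), and also declare all states with m = 0 or l = L type 1. Then for any type 1 state (l',m') and any state (l,m) with l ≥ l' and m ≤ m', (l,m) is also type 1. Consequently, if (l',m') fails to be type 1 (is 'type 2'), then so does every (l,m) with l ≤ l' and m ≥ m'. -/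
/-!
With `r l m = l * μ l m`, the margin `r l m - r (l + 1) (m - 1)` that decides type 1 is
non-increasing in `m` (concavity of `r` in `m` plus supermodularity) and non-decreasing in `l`
(concavity in `l` plus supermodularity). The boundary states `m = 0` and `l = L` are type 1 by
definition, so the moves `m + 1 ↦ m` and `l ↦ l + 1` preserve type 1; the claim about type 2
states is the contrapositive.
-/

/-- A state `(l, m)` is type 1 if `m = 0`, or `l = L`, or its total service rate
exceeds that of its lower-left neighbour. -/
def IsType1 (L : ℕ) (μ : ℕ → ℕ → ℝ) (l m : ℕ) : Prop :=
  m = 0 ∨ l = L ∨ (l : ℝ) * μ l m > ((l : ℝ) + 1) * μ (l + 1) (m - 1)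

/-- Assumption 2 of the paper, for the total service rate `r l m = l * μ l m` on `l ≤ L`. -/
structure ConcaveSupermodularRate (L : ℕ) (μ : ℕ → ℕ → ℝ) : Prop where
  concave_right : ∀ l, l ≤ L → ∀ m,
    (l : ℝ) * μ l (m + 2) - (l : ℝ) * μ l (m + 1) ≤ (l : ℝ) * μ l (m + 1) - (l : ℝ) * μ l m
  supermodular : ∀ l, l + 1 ≤ L → ∀ m,
    (l : ℝ) * μ l (m + 1) - (l : ℝ) * μ l m ≤
      ((l : ℝ) + 1) * μ (l + 1) (m + 1) - ((l : ℝ) + 1) * μ (l + 1) m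
  concave_left : ∀ l, l + 2 ≤ L → ∀ m,
    ((l : ℝ) + 2) * μ (l + 2) m - ((l : ℝ) + 1) * μ (l + 1) m ≤
      ((l : ℝ) + 1) * μ (l + 1) m - (l : ℝ) * μ l m

namespace ConcaveSupermodularRate

variable {L : ℕ} {μ : ℕ → ℕ → ℝ}

theorem isType1_of_isType1_succ (hμ : ConcaveSupermodularRate L μ) {l m : ℕ} (hl : l ≤ L)
    (h : IsType1 L μ l (m + 1)) : IsType1 L μ l m := by
  rcases h with h | rfl | h
  · omega
  · exact .inr (.inl rfl)
  rcases hl.eq_or_lt with rfl | hl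
  · exact .inr (.inl rfl)
  cases m with
  | zero => exact .inl rfl
  | succ k =>
    refine .inr (.inr ?_)
    simp only [Nat.add_sub_cancel] at h ⊢
    linarith [hμ.concave_right l hl.le k, hμ.supermodular l hl k]

theorem isType1_succ_of_isType1 (hμ : ConcaveSupermodularRate L μ) {l m : ℕ} (hl : l + 1 ≤ L)
    (h : IsType1 L μ l m) : IsType1 L μ (l + 1) m := by
  rcases h with rfl | rfl | h
  · exact .inl rfl
  · omega
  rcases hl.eq_or_lt with hL | hl
  · exact .inr (.inl hL)
  cases m with
  | zero => exact .inl rfl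
  | succ k =>
    refine .inr (.inr ?_)
    simp only [Nat.add_sub_cancel] at h ⊢
    push_cast
    linarith [hμ.concave_left l hl k, hμ.supermodular l (by omega) k]

theorem isType1_mono (hμ : ConcaveSupermodularRate L μ) {l' m' l m : ℕ} (hl' : l' ≤ l)
    (hl : l ≤ L) (hm : m ≤ m') (h : IsType1 L μ l' m') : IsType1 L μ l m := by
  have hdown : IsType1 L μ l' m :=
    Nat.decreasingInduction (fun k _ hk => hμ.isType1_of_isType1_succ (hl'.trans hl) hk) h hm
  induction l, hl' using Nat.le_induction with
  | base => exact hdown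
  | succ k _ ih => exact hμ.isType1_succ_of_isType1 hl (ih (by omega))

end ConcaveSupermodularRate

theorem stmt2_general
    (L : ℕ) (μ : ℕ → ℕ → ℝ)
    (h1m : ∀ l, l ≤ L → ∀ m,
      (l : ℝ) * μ l (m + 2) - (l : ℝ) * μ l (m + 1) ≤
        (l : ℝ) * μ l (m + 1) - (l : ℝ) * μ l m)
    (h1l : ∀ l, l + 1 ≤ L → ∀ m,
      (l : ℝ) * μ l (m + 1) - (l : ℝ) * μ l m ≤
        ((l : ℝ) + 1) * μ (l + 1) (m + 1) - ((l : ℝ) + 1) * μ (l + 1) m)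
    (h2l : ∀ l, l + 2 ≤ L → ∀ m,
      ((l : ℝ) + 2) * μ (l + 2) m - ((l : ℝ) + 1) * μ (l + 1) m ≤
        ((l : ℝ) + 1) * μ (l + 1) m - (l : ℝ) * μ l m) :
    (∀ l' m', l' ≤ L → IsType1 L μ l' m' →
      ∀ l m, l' ≤ l → l ≤ L → m ≤ m' → IsType1 L μ l m) ∧
    (∀ l' m', l' ≤ L → ¬ IsType1 L μ l' m' →
      ∀ l m, l ≤ l' → m' ≤ m → ¬ IsType1 L μ l m) := by
  have hμ : ConcaveSupermodularRate L μ := ⟨h1m, h1l, h2l⟩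
  refine ⟨fun l' m' _ h l m hl' hl hm => hμ.isType1_mono hl' hl hm h, ?_⟩
  intro l' m' hl'L h l m hl hm hlm
  exact h (hμ.isType1_mono hl hl'L hm hlm)

/-- Lemma 2 of the paper: under Assumption 2, type 1 states are downward-left closed
and type 2 states are upward-right closed. -/
theorem stmt2
    (L : ℕ) (hL : 0 < L) (μ : ℕ → ℕ → ℝ)
    (hpos : ∀ l, l ≤ L → ∀ m, 0 < μ l m)
    (h1m : ∀ l, l ≤ L → ∀ m,
      (l : ℝ) * μ l (m + 2) - (l : ℝ) * μ l (m + 1) ≤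
        (l : ℝ) * μ l (m + 1) - (l : ℝ) * μ l m)
    (h1l : ∀ l, l + 1 ≤ L → ∀ m,
      (l : ℝ) * μ l (m + 1) - (l : ℝ) * μ l m ≤
        ((l : ℝ) + 1) * μ (l + 1) (m + 1) - ((l : ℝ) + 1) * μ (l + 1) m)
    (h2l : ∀ l, l + 2 ≤ L → ∀ m,
      ((l : ℝ) + 2) * μ (l + 2) m - ((l : ℝ) + 1) * μ (l + 1) m ≤
        ((l : ℝ) + 1) * μ (l + 1) m - (l : ℝ) * μ l m)
    (h2m : ∀ l, l + 1 ≤ L → ∀ m,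
      ((l : ℝ) + 1) * μ (l + 1) m - (l : ℝ) * μ l m ≤
        ((l : ℝ) + 1) * μ (l + 1) (m + 1) - (l : ℝ) * μ l (m + 1)) :
    (∀ l' m', l' ≤ L → IsType1 L μ l' m' →
      ∀ l m, l' ≤ l → l ≤ L → m ≤ m' → IsType1 L μ l m) ∧
    (∀ l' m', l' ≤ L → ¬ IsType1 L μ l' m' →
      ∀ l m, l ≤ l' → m' ≤ m → ¬ IsType1 L μ l m) :=
  stmt2_general L μ h1m h1l h2l
end

section
/- Suppose the conditions of Assumption 2 hold: l·μ(l,m+1) − l·μ(l,m) is non-increasing in m and non-decreasing in l, and (l+1)·μ(l+1,m) − l·μ(l,m) is non-increasing in l and non-decreasing in m. Then on each anti-diagonal {(l,m) : l+m = n, 0 ≤ l ≤ min(n,L)}, the total service rate l·μ(l,m) as a function of l (with m = n−l) is unimodal: there exists l* such that l·μ(l,n−l) is non-decreasing for l ≤ l* and non-increasing for l ≥ l*. -/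
/-!
Write `f l = l·μ(l, n - l)` for the total service rate along the anti-diagonal `l + m = n`.
The four conditions of Assumption 2 combine to make `f` discretely concave: its forward
difference `f (l+1) - f l` is non-increasing in `l`. Hence once `f` starts to decrease it keeps
decreasing, and the turning point is the first `l` with `f (l+1) < f l`.
-/

section Concave

variable {α : Type*} [AddCommGroup α] [LinearOrder α] [IsOrderedAddMonoid α]

theorem apply_succ_lt_of_concave_of_le {f : ℕ → α} {N : ℕ}
    (hconc : ∀ l, l + 2 ≤ N → f (l + 2) - f (l + 1) ≤ f (l + 1) - f l)
    {k l : ℕ} (hkl : k ≤ l) (hlN : l + 1 ≤ N) (hk : f (k + 1) < f k) :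
    f (l + 1) < f l := by
  induction l, hkl using Nat.le_induction with
  | base => exact hk
  | succ l _ ih =>
    exact sub_neg.mp ((hconc l hlN).trans_lt (sub_neg.mpr (ih (by omega))))

theorem exists_turning_point_of_concave (f : ℕ → α) (N : ℕ)
    (hconc : ∀ l, l + 2 ≤ N → f (l + 2) - f (l + 1) ≤ f (l + 1) - f l) :
    ∃ k : ℕ, (∀ l, l + 1 ≤ k → l + 1 ≤ N → f l ≤ f (l + 1)) ∧
      (∀ l, k ≤ l → l + 1 ≤ N → f (l + 1) ≤ f l) := by
  classical
  have hdesc : ∃ l, N < l + 1 ∨ f (l + 1) < f l := ⟨N, Or.inl (Nat.lt_succ_self N)⟩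
  refine ⟨Nat.find hdesc, fun l hlk hlN => ?_, fun l hkl hlN => ?_⟩
  · exact not_lt.mp (not_or.mp (Nat.find_min hdesc hlk)).2
  · have hk : f (Nat.find hdesc + 1) < f (Nat.find hdesc) :=
      (Nat.find_spec hdesc).resolve_left (by omega)
    exact (apply_succ_lt_of_concave_of_le hconc hkl hlN hk).le

end Concave

theorem rate_concave_on_antidiagonal (L : ℕ) (μ : ℕ → ℕ → ℝ)
    (h1m : ∀ l, l ≤ L → ∀ m,
      (l : ℝ) * μ l (m + 2) - (l : ℝ) * μ l (m + 1) ≤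
        (l : ℝ) * μ l (m + 1) - (l : ℝ) * μ l m)
    (h1l : ∀ l, l + 1 ≤ L → ∀ m,
      (l : ℝ) * μ l (m + 1) - (l : ℝ) * μ l m ≤
        ((l : ℝ) + 1) * μ (l + 1) (m + 1) - ((l : ℝ) + 1) * μ (l + 1) m)
    (h2l : ∀ l, l + 2 ≤ L → ∀ m,
      ((l : ℝ) + 2) * μ (l + 2) m - ((l : ℝ) + 1) * μ (l + 1) m ≤
        ((l : ℝ) + 1) * μ (l + 1) m - (l : ℝ) * μ l m)
    (h2m : ∀ l, l + 1 ≤ L → ∀ m,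
      ((l : ℝ) + 1) * μ (l + 1) m - (l : ℝ) * μ l m ≤
        ((l : ℝ) + 1) * μ (l + 1) (m + 1) - (l : ℝ) * μ l (m + 1))
    {l : ℕ} (hl : l + 2 ≤ L) (m : ℕ) :
    ((l : ℝ) + 2) * μ (l + 2) m - ((l : ℝ) + 1) * μ (l + 1) (m + 1) ≤
      ((l : ℝ) + 1) * μ (l + 1) (m + 1) - (l : ℝ) * μ l (m + 2) := by
  have := h1m l (by omega) m
  have := h1l l (by omega) m
  have := h2l l hl m
  have := h2m l (by omega) m
  linarith

theorem stmt3_general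
    (L : ℕ) (μ : ℕ → ℕ → ℝ)
    (h1m : ∀ l, l ≤ L → ∀ m,
      (l : ℝ) * μ l (m + 2) - (l : ℝ) * μ l (m + 1) ≤
        (l : ℝ) * μ l (m + 1) - (l : ℝ) * μ l m)
    (h1l : ∀ l, l + 1 ≤ L → ∀ m,
      (l : ℝ) * μ l (m + 1) - (l : ℝ) * μ l m ≤
        ((l : ℝ) + 1) * μ (l + 1) (m + 1) - ((l : ℝ) + 1) * μ (l + 1) m)
    (h2l : ∀ l, l + 2 ≤ L → ∀ m,
      ((l : ℝ) + 2) * μ (l + 2) m - ((l : ℝ) + 1) * μ (l + 1) m ≤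
        ((l : ℝ) + 1) * μ (l + 1) m - (l : ℝ) * μ l m)
    (h2m : ∀ l, l + 1 ≤ L → ∀ m,
      ((l : ℝ) + 1) * μ (l + 1) m - (l : ℝ) * μ l m ≤
        ((l : ℝ) + 1) * μ (l + 1) (m + 1) - (l : ℝ) * μ l (m + 1)) :
    ∀ n : ℕ, ∃ lstar : ℕ,
      (∀ l : ℕ, l + 1 ≤ lstar → l + 1 ≤ min n L →
        (l : ℝ) * μ l (n - l) ≤ ((l : ℝ) + 1) * μ (l + 1) (n - (l + 1))) ∧
      (∀ l : ℕ, lstar ≤ l → l + 1 ≤ min n L →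
        ((l : ℝ) + 1) * μ (l + 1) (n - (l + 1)) ≤ (l : ℝ) * μ l (n - l)) := by
  intro n
  set f : ℕ → ℝ := fun l => (l : ℝ) * μ l (n - l) with hf
  have hconc : ∀ l, l + 2 ≤ min n L → f (l + 2) - f (l + 1) ≤ f (l + 1) - f l := by
    intro l hl
    have e1 : n - (l + 1) = n - (l + 2) + 1 := by omega
    have e0 : n - l = n - (l + 2) + 2 := by omega
    simp only [hf, e1, e0]
    push_cast
    exact rate_concave_on_antidiagonal L μ h1m h1l h2l h2m (hl.trans (min_le_right n L)) _
  obtain ⟨k, hup, hdown⟩ :=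
    exists_turning_point_of_concave f (min n L) hconc
  exact ⟨k, fun l hlk hlN => by exact_mod_cast hup l hlk hlN,
    fun l hkl hlN => by exact_mod_cast hdown l hkl hlN⟩

/-- Under Assumption 2, the total service rate is unimodal along every anti-diagonal
`l + m = n`. -/
theorem stmt3
    (L : ℕ) (hL : 0 < L) (μ : ℕ → ℕ → ℝ)
    (hpos : ∀ l, l ≤ L → ∀ m, 0 < μ l m)
    (h1m : ∀ l, l ≤ L → ∀ m,
      (l : ℝ) * μ l (m + 2) - (l : ℝ) * μ l (m + 1) ≤
        (l : ℝ) * μ l (m + 1) - (l : ℝ) * μ l m)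
    (h1l : ∀ l, l + 1 ≤ L → ∀ m,
      (l : ℝ) * μ l (m + 1) - (l : ℝ) * μ l m ≤
        ((l : ℝ) + 1) * μ (l + 1) (m + 1) - ((l : ℝ) + 1) * μ (l + 1) m)
    (h2l : ∀ l, l + 2 ≤ L → ∀ m,
      ((l : ℝ) + 2) * μ (l + 2) m - ((l : ℝ) + 1) * μ (l + 1) m ≤
        ((l : ℝ) + 1) * μ (l + 1) m - (l : ℝ) * μ l m)
    (h2m : ∀ l, l + 1 ≤ L → ∀ m,
      ((l : ℝ) + 1) * μ (l + 1) m - (l : ℝ) * μ l m ≤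
        ((l : ℝ) + 1) * μ (l + 1) (m + 1) - (l : ℝ) * μ l (m + 1)) :
    ∀ n : ℕ, ∃ lstar : ℕ,
      (∀ l : ℕ, l + 1 ≤ lstar → l + 1 ≤ min n L →
        (l : ℝ) * μ l (n - l) ≤ ((l : ℝ) + 1) * μ (l + 1) (n - (l + 1))) ∧
      (∀ l : ℕ, lstar ≤ l → l + 1 ≤ min n L →
        ((l : ℝ) + 1) * μ (l + 1) (n - (l + 1)) ≤ (l : ℝ) * μ l (n - l)) :=
  stmt3_general L μ h1m h1l h2l h2m
end

section
/- Suppose the stronger difference conditions hold for μ itself: μ(l,m+1) − μ(l,m) is non-increasing in m and non-decreasing in l, μ(l+1,m) − μ(l,m) is non-increasing in l and non-decreasing in m, and additionally μ(l,m+1) ≥ μ(l,m) (μ non-decreasing in m) and μ(l+1,m) ≤ μ(l,m) (μ non-increasing in l) with μ > 0. Then the function f(l,m) = l·μ(l,m) satisfies Assumption 2: f(l,m+1) − f(l,m) is non-increasing in m and non-decreasing in l, and f(l+1,m) − f(l,m) is non-increasing in l and non-decreasing in m. -/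
/-!
The `m`-differences of `l * μ l m` are `l` times those of `μ`, while in `l` the discrete
product rule gives `(l + 1) * μ (l + 1) m - l * μ l m = μ (l + 1) m + l * (μ (l + 1) m - μ l m)`.
Each condition on `l * μ` is then the corresponding condition on `μ` scaled by `l ≥ 0`, with
the monotonicity of `μ` absorbing the extra terms.
-/

section TotalRate

variable (μ : ℕ → ℕ → ℝ)

theorem totalRate_diff_m_antitone_m
    (hdm_m : ∀ l m, μ l (m + 2) - μ l (m + 1) ≤ μ l (m + 1) - μ l m) (l m : ℕ) :
    (l : ℝ) * μ l (m + 2) - (l : ℝ) * μ l (m + 1) ≤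
      (l : ℝ) * μ l (m + 1) - (l : ℝ) * μ l m := by
  simpa only [mul_sub] using mul_le_mul_of_nonneg_left (hdm_m l m) l.cast_nonneg

theorem totalRate_diff_m_monotone_l
    (hdm_l : ∀ l m, μ l (m + 1) - μ l m ≤ μ (l + 1) (m + 1) - μ (l + 1) m)
    (hmono_m : ∀ l m, μ l m ≤ μ l (m + 1)) (l m : ℕ) :
    (l : ℝ) * μ l (m + 1) - (l : ℝ) * μ l m ≤
      ((l : ℝ) + 1) * μ (l + 1) (m + 1) - ((l : ℝ) + 1) * μ (l + 1) m := by
  simp only [← mul_sub]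
  calc (l : ℝ) * (μ l (m + 1) - μ l m)
      ≤ l * (μ (l + 1) (m + 1) - μ (l + 1) m) :=
        mul_le_mul_of_nonneg_left (hdm_l l m) l.cast_nonneg
    _ ≤ (l + 1) * (μ (l + 1) (m + 1) - μ (l + 1) m) :=
        mul_le_mul_of_nonneg_right (by linarith) (sub_nonneg.2 (hmono_m (l + 1) m))

theorem succ_mul_sub_mul (l a b : ℝ) : (l + 1) * b - l * a = b + l * (b - a) := by
  ring

theorem totalRate_diff_l_antitone_l
    (hdl_l : ∀ l m, μ (l + 2) m - μ (l + 1) m ≤ μ (l + 1) m - μ l m)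
    (hmono_l : ∀ l m, μ (l + 1) m ≤ μ l m) (l m : ℕ) :
    ((l : ℝ) + 2) * μ (l + 2) m - ((l : ℝ) + 1) * μ (l + 1) m ≤
      ((l : ℝ) + 1) * μ (l + 1) m - (l : ℝ) * μ l m := by
  rw [show (l : ℝ) + 2 = (l + 1) + 1 by ring, succ_mul_sub_mul, succ_mul_sub_mul]
  refine add_le_add (hmono_l (l + 1) m) ?_
  calc ((l : ℝ) + 1) * (μ (l + 2) m - μ (l + 1) m)
      ≤ l * (μ (l + 2) m - μ (l + 1) m) :=
        mul_le_mul_of_nonpos_right (by linarith) (sub_nonpos.2 (hmono_l (l + 1) m))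
    _ ≤ l * (μ (l + 1) m - μ l m) := mul_le_mul_of_nonneg_left (hdl_l l m) l.cast_nonneg

theorem totalRate_diff_l_monotone_m
    (hdl_m : ∀ l m, μ (l + 1) m - μ l m ≤ μ (l + 1) (m + 1) - μ l (m + 1))
    (hmono_m : ∀ l m, μ l m ≤ μ l (m + 1)) (l m : ℕ) :
    ((l : ℝ) + 1) * μ (l + 1) m - (l : ℝ) * μ l m ≤
      ((l : ℝ) + 1) * μ (l + 1) (m + 1) - (l : ℝ) * μ l (m + 1) := by
  rw [succ_mul_sub_mul, succ_mul_sub_mul]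
  exact add_le_add (hmono_m (l + 1) m) (mul_le_mul_of_nonneg_left (hdl_m l m) l.cast_nonneg)

end TotalRate

theorem stmt5_general (μ : ℕ → ℕ → ℝ)
    (hdm_m : ∀ l m, μ l (m + 2) - μ l (m + 1) ≤ μ l (m + 1) - μ l m)
    (hdm_l : ∀ l m, μ l (m + 1) - μ l m ≤ μ (l + 1) (m + 1) - μ (l + 1) m)
    (hdl_l : ∀ l m, μ (l + 2) m - μ (l + 1) m ≤ μ (l + 1) m - μ l m)
    (hdl_m : ∀ l m, μ (l + 1) m - μ l m ≤ μ (l + 1) (m + 1) - μ l (m + 1))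
    (hmono_m : ∀ l m, μ l m ≤ μ l (m + 1))
    (hmono_l : ∀ l m, μ (l + 1) m ≤ μ l m) :
    (∀ l m : ℕ, (l : ℝ) * μ l (m + 2) - (l : ℝ) * μ l (m + 1) ≤
        (l : ℝ) * μ l (m + 1) - (l : ℝ) * μ l m) ∧
    (∀ l m : ℕ, (l : ℝ) * μ l (m + 1) - (l : ℝ) * μ l m ≤
        ((l : ℝ) + 1) * μ (l + 1) (m + 1) - ((l : ℝ) + 1) * μ (l + 1) m) ∧
    (∀ l m : ℕ, ((l : ℝ) + 2) * μ (l + 2) m - ((l : ℝ) + 1) * μ (l + 1) m ≤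
        ((l : ℝ) + 1) * μ (l + 1) m - (l : ℝ) * μ l m) ∧
    (∀ l m : ℕ, ((l : ℝ) + 1) * μ (l + 1) m - (l : ℝ) * μ l m ≤
        ((l : ℝ) + 1) * μ (l + 1) (m + 1) - (l : ℝ) * μ l (m + 1)) :=
  ⟨totalRate_diff_m_antitone_m μ hdm_m, totalRate_diff_m_monotone_l μ hdm_l hmono_m,
    totalRate_diff_l_antitone_l μ hdl_l hmono_l, totalRate_diff_l_monotone_m μ hdl_m hmono_m⟩

/-- The analogous monotone-difference conditions on `μ` itself (together with
monotonicity of `μ` in each argument) imply Assumption 2 for `f(l,m) = l·μ(l,m)`. -/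
theorem stmt5 (μ : ℕ → ℕ → ℝ)
    (hpos : ∀ l m, 0 < μ l m)
    (hdm_m : ∀ l m, μ l (m + 2) - μ l (m + 1) ≤ μ l (m + 1) - μ l m)
    (hdm_l : ∀ l m, μ l (m + 1) - μ l m ≤ μ (l + 1) (m + 1) - μ (l + 1) m)
    (hdl_l : ∀ l m, μ (l + 2) m - μ (l + 1) m ≤ μ (l + 1) m - μ l m)
    (hdl_m : ∀ l m, μ (l + 1) m - μ l m ≤ μ (l + 1) (m + 1) - μ l (m + 1))
    (hmono_m : ∀ l m, μ l m ≤ μ l (m + 1))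
    (hmono_l : ∀ l m, μ (l + 1) m ≤ μ l m) :
    (∀ l m : ℕ, (l : ℝ) * μ l (m + 2) - (l : ℝ) * μ l (m + 1) ≤
        (l : ℝ) * μ l (m + 1) - (l : ℝ) * μ l m) ∧
    (∀ l m : ℕ, (l : ℝ) * μ l (m + 1) - (l : ℝ) * μ l m ≤
        ((l : ℝ) + 1) * μ (l + 1) (m + 1) - ((l : ℝ) + 1) * μ (l + 1) m) ∧
    (∀ l m : ℕ, ((l : ℝ) + 2) * μ (l + 2) m - ((l : ℝ) + 1) * μ (l + 1) m ≤
        ((l : ℝ) + 1) * μ (l + 1) m - (l : ℝ) * μ l m) ∧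
    (∀ l m : ℕ, ((l : ℝ) + 1) * μ (l + 1) m - (l : ℝ) * μ l m ≤
        ((l : ℝ) + 1) * μ (l + 1) (m + 1) - (l : ℝ) * μ l (m + 1)) :=
  stmt5_general μ hdm_m hdm_l hdl_l hdl_m hmono_m hmono_l
end

section
/- Let C, t₀ > 0 with C ≤ t₀ and α₂ < 0, and fix m ≥ 0. Define h : [0,∞) → ℝ by h(o) = 1 / (C·(m+1)^{α₁}·(o+1)^{α₂} + t₀) with α₁ < 0. Then h is concave in o, i.e., h''(o) ≤ 0 for all o > 0. -/
/-- Concavity in the number of idle drivers: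
`h(o) = 1/(C (m+1)^{α₁} (o+1)^{α₂} + t₀)` has `h''(o) ≤ 0` for `o > 0`. -/
theorem stmt8 (C t₀ α₁ α₂ : ℝ) (hC : 0 < C) (ht₀ : 0 < t₀) (hCt : C ≤ t₀)
    (hα₁ : α₁ < 0) (hα₂ : α₂ < 0) (m : ℝ) (hm : 0 ≤ m) :
    ∀ o : ℝ, 0 < o →
      deriv (deriv (fun o' : ℝ => 1 / (C * (m + 1) ^ α₁ * (o' + 1) ^ α₂ + t₀))) o ≤ 0 := by
  intro o ho
  have hApos : 0 < C * (m + 1) ^ α₁ :=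
    mul_pos hC (Real.rpow_pos_of_pos (by linarith) _)
  have hAle : C * (m + 1) ^ α₁ ≤ t₀ := by
    have h1 : (m + 1 : ℝ) ^ α₁ ≤ 1 :=
      Real.rpow_le_one_of_one_le_of_nonpos (by linarith) hα₁.le
    nlinarith
  set A : ℝ := C * (m + 1) ^ α₁ with hA
  -- derivative of the inner function g
  have hgd : ∀ x : ℝ, -1 < x →
      HasDerivAt (fun x' : ℝ => A * (x' + 1) ^ α₂ + t₀) (A * (α₂ * (x + 1) ^ (α₂ - 1))) x := by
    intro x hx
    have h1 : HasDerivAt (fun x' : ℝ => x' + 1) 1 x := (hasDerivAt_id x).add_const 1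
    have h2 : HasDerivAt (fun x' : ℝ => (x' + 1) ^ α₂) (1 * α₂ * (x + 1) ^ (α₂ - 1)) x :=
      h1.rpow_const (Or.inl (by linarith))
    have h3 : A * (α₂ * (x + 1) ^ (α₂ - 1)) = A * (1 * α₂ * (x + 1) ^ (α₂ - 1)) := by ring
    rw [h3]
    exact (h2.const_mul A).add_const t₀
  have hgpos : ∀ x : ℝ, -1 < x → 0 < A * (x + 1) ^ α₂ + t₀ := fun x hx =>
    add_pos (mul_pos hApos (Real.rpow_pos_of_pos (by linarith) _)) ht₀
  have hfd : ∀ x : ℝ, -1 < x →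
      HasDerivAt (fun o' : ℝ => 1 / (A * (o' + 1) ^ α₂ + t₀))
        (-(A * (α₂ * (x + 1) ^ (α₂ - 1))) / (A * (x + 1) ^ α₂ + t₀) ^ 2) x := by
    intro x hx
    simpa [one_div] using (hgd x hx).fun_inv (ne_of_gt (hgpos x hx))
  have hev : deriv (fun o' : ℝ => 1 / (A * (o' + 1) ^ α₂ + t₀)) =ᶠ[nhds o]
      (fun x : ℝ => -(A * (α₂ * (x + 1) ^ (α₂ - 1))) / (A * (x + 1) ^ α₂ + t₀) ^ 2) := by
    filter_upwards [eventually_gt_nhds (show (-1 : ℝ) < o by linarith)] with x hx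
    exact (hfd x hx).deriv
  rw [hev.deriv_eq]
  -- derivative of the first-derivative expression
  have ho1 : (-1 : ℝ) < o := by linarith
  have hud : HasDerivAt (fun x : ℝ => -(A * (α₂ * (x + 1) ^ (α₂ - 1))))
      (-(A * (α₂ * (1 * (α₂ - 1) * (o + 1) ^ (α₂ - 1 - 1))))) o := by
    have h1 : HasDerivAt (fun x' : ℝ => x' + 1) 1 o := (hasDerivAt_id o).add_const 1
    have h2 : HasDerivAt (fun x' : ℝ => (x' + 1) ^ (α₂ - 1))
        (1 * (α₂ - 1) * (o + 1) ^ (α₂ - 1 - 1)) o :=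
      h1.rpow_const (Or.inl (by linarith))
    exact ((h2.const_mul α₂).const_mul A).neg
  have hwd : HasDerivAt (fun x : ℝ => (A * (x + 1) ^ α₂ + t₀) ^ 2)
      (2 * (A * (o + 1) ^ α₂ + t₀) ^ 1 * (A * (α₂ * (o + 1) ^ (α₂ - 1)))) o :=
    (hgd o ho1).pow 2
  have hwne : (A * (o + 1) ^ α₂ + t₀) ^ 2 ≠ 0 := pow_ne_zero 2 (ne_of_gt (hgpos o ho1))
  have hD := (hud.fun_div hwd hwne).deriv
  rw [hD]
  -- sign analysis
  set p : ℝ := o + 1 with hp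
  have hp1 : (1 : ℝ) < p := by simp [hp]; linarith
  have hppos : (0 : ℝ) < p := by linarith
  have hQpos : 0 < p ^ (α₂ - 1 - 1) := Real.rpow_pos_of_pos hppos _
  have hP1 : p ^ (α₂ - 1) = p ^ (α₂ - 1 - 1) * p := by
    have h := Real.rpow_add hppos (α₂ - 1 - 1) 1
    rw [Real.rpow_one] at h
    rw [show α₂ - 1 = α₂ - 1 - 1 + 1 by ring, h]
    norm_num
  have hP0 : p ^ α₂ = p ^ (α₂ - 1 - 1) * p * p := by
    have h := Real.rpow_add hppos (α₂ - 1) 1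
    rw [Real.rpow_one] at h
    rw [show α₂ = α₂ - 1 + 1 by ring, h, hP1]
    norm_num
  have hP0le : p ^ α₂ ≤ 1 := Real.rpow_le_one_of_one_le_of_nonpos hp1.le hα₂.le
  have hAP0 : A * p ^ α₂ ≤ t₀ := by nlinarith [Real.rpow_pos_of_pos hppos α₂]
  have hgpos' : 0 < A * p ^ α₂ + t₀ := hgpos o ho1
  set Q : ℝ := p ^ (α₂ - 1 - 1) with hQ
  set g : ℝ := A * p ^ α₂ + t₀ with hg
  have hnum : -(A * (α₂ * (1 * (α₂ - 1) * Q))) * g ^ 2 -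
      -(A * (α₂ * (Q * p))) * (2 * g ^ 1 * (A * (α₂ * (Q * p)))) =
      A * α₂ * Q * g * (t₀ + A * (Q * p * p) + α₂ * (A * (Q * p * p) - t₀)) := by
    rw [hg, hP0]; ring
  have hbr : 0 ≤ t₀ + A * (Q * p * p) + α₂ * (A * (Q * p * p) - t₀) := by
    have h1 : 0 ≤ α₂ * (A * (Q * p * p) - t₀) := by
      have h2 : A * (Q * p * p) - t₀ ≤ 0 := by rw [← hP0] at *; linarith
      nlinarith
    have h2 : 0 < A * (Q * p * p) := by positivity
    linarith
  rw [hP1]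
  apply div_nonpos_of_nonpos_of_nonneg
  · rw [hnum]
    have hAQg : 0 ≤ A * Q * g := by positivity
    have hfac : A * α₂ * Q * g ≤ 0 := by
      calc A * α₂ * Q * g = α₂ * (A * Q * g) := by ring
      _ ≤ 0 := mul_nonpos_iff.mpr (Or.inr ⟨hα₂.le, hAQg⟩)
    exact mul_nonpos_iff.mpr (Or.inr ⟨hfac, hbr⟩)
  · positivity
end
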